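/- arXiv:2509.08851 — 8 statements merged into one kernel-verified Lean document; each statement's English description precedes it below -/
import Mathlib

section
/- Fix real parameters b > 1 and m > b − 1, and fix ℓ ≥ 0 and p ∈ [0,1). Then: (i) the denominator m + (ℓ − (b−1))(1−p) is strictly positive; (ii) the function π ↦ u_C(π) − u_D(π) = [π + (1−π)p − (1−π)(1−p)ℓ] − [π(b−m) + (1−π)pb] is strictly increasing on [0,1]; and (iii) setting π̂(ℓ, p) = (p(b−1) + (1−p)ℓ) / (m + (ℓ − (b−1))(1−p)), one has π̂(ℓ, p) ∈ [0,1) and, for every π ∈ [0,1], u_C(π) ≥ u_D(π) if and only if π ≥ π̂(ℓ, p). -/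
/-- Expected payoff from cooperating. -/
def uC (q p l : ℝ) : ℝ := q + (1 - q) * p - (1 - q) * (1 - p) * l

/-- Expected payoff from defecting. -/
def uD (b m q p : ℝ) : ℝ := q * (b - m) + (1 - q) * p * b

/-- for `b > 1`, `m > b - 1`, `ℓ ≥ 0`, `p ∈ [0,1)`:
(i) the denominator `m + (ℓ − (b−1))(1−p)` is strictly positive;
(ii) `π ↦ u_C(π) − u_D(π)` is strictly increasing on `[0,1]`;
(iii) the threshold `π̂(ℓ,p)` lies in `[0,1)` and cooperation is weakly preferred
iff `π ≥ π̂(ℓ,p)`. -/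
theorem stmt1 (b m l p : ℝ) (hb : 1 < b) (hm : b - 1 < m)
    (hl : 0 ≤ l) (hp : p ∈ Set.Ico (0 : ℝ) 1) :
    0 < m + (l - (b - 1)) * (1 - p) ∧
    StrictMonoOn (fun q : ℝ => uC q p l - uD b m q p) (Set.Icc 0 1) ∧
    (p * (b - 1) + (1 - p) * l) / (m + (l - (b - 1)) * (1 - p)) ∈ Set.Ico (0 : ℝ) 1 ∧
    (∀ q ∈ Set.Icc (0 : ℝ) 1,
      uD b m q p ≤ uC q p l ↔
        (p * (b - 1) + (1 - p) * l) / (m + (l - (b - 1)) * (1 - p)) ≤ q) := by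
  obtain ⟨hp0, hp1⟩ := hp
  have hD : 0 < m + (l - (b - 1)) * (1 - p) := by nlinarith
  have hN : 0 ≤ p * (b - 1) + (1 - p) * l := by nlinarith
  refine ⟨hD, ?_, ⟨div_nonneg hN hD.le, ?_⟩, ?_⟩
  · intro x _ y _ hxy
    simp only [uC, uD]
    nlinarith
  · rw [div_lt_one hD]; nlinarith
  · intro q _
    rw [div_le_iff₀ hD]
    simp only [uC, uD]
    constructor <;> intro h <;> nlinarith
end

section
/- Let b > 1 and let F be a differentiable cumulative distribution function on [0, ℓ̄] with continuous density f = F′ > 0 on [0, ℓ̄], F(0) = 0 and F(ℓ̄) = 1, and suppose ℓ̄ > b − 1. Define the hazard rate h(ℓ) = f(ℓ)/(1−F(ℓ)) for ℓ ∈ [0, ℓ̄) and assume h is monotone increasing on [0, ℓ̄). Then the equation ℓ − 1/h(ℓ) = b − 1 has a unique solution ℓ′, and ℓ′ ∈ (b−1, ℓ̄). -/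
/-- with `b > 1`, `F` a differentiable cdf on `[0, ℓ̄]` with continuous
positive density `f`, `F 0 = 0`, `F ℓ̄ = 1`, `ℓ̄ > b − 1`, and the hazard rate
`h(ℓ) = f(ℓ)/(1−F(ℓ))` monotone increasing on `[0, ℓ̄)`, the equation
`ℓ − 1/h(ℓ) = b − 1` has a unique solution `ℓ′` on `[0, ℓ̄)`, and `ℓ′ ∈ (b−1, ℓ̄)`. -/
theorem stmt4 (b lbar : ℝ) (F f : ℝ → ℝ)
    (hb : 1 < b)
    (hF : ∀ x ∈ Set.Icc 0 lbar, HasDerivAt F (f x) x)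
    (hf : ContinuousOn f (Set.Icc 0 lbar))
    (hfpos : ∀ x ∈ Set.Icc 0 lbar, 0 < f x)
    (hF0 : F 0 = 0) (hF1 : F lbar = 1)
    (hlbar : b - 1 < lbar)
    (hmono : MonotoneOn (fun l => f l / (1 - F l)) (Set.Ico 0 lbar)) :
    (∃! l', l' ∈ Set.Ico 0 lbar ∧ l' - (f l' / (1 - F l'))⁻¹ = b - 1) ∧
    (∀ l' ∈ Set.Ico 0 lbar, l' - (f l' / (1 - F l'))⁻¹ = b - 1 →
      l' ∈ Set.Ioo (b - 1) lbar) := by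
  have hlb0 : (0:ℝ) < b - 1 := by linarith
  have hlbar0 : (0:ℝ) < lbar := by linarith
  have hsub : Set.Ico 0 lbar ⊆ Set.Icc 0 lbar := Set.Ico_subset_Icc_self
  have hFc : ContinuousOn F (Set.Icc 0 lbar) := fun x hx =>
    (hF x hx).continuousAt.continuousWithinAt
  -- F strictly monotone on Icc
  have hFs : StrictMonoOn F (Set.Icc 0 lbar) := by
    apply strictMonoOn_of_deriv_pos (convex_Icc _ _) hFc
    intro x hx
    rw [interior_Icc] at hx
    rw [(hF x (Set.Ioo_subset_Icc_self hx)).deriv]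
    exact hfpos x (Set.Ioo_subset_Icc_self hx)
  have hFlt : ∀ x ∈ Set.Ico 0 lbar, F x < 1 := by
    intro x hx
    have := hFs (hsub hx) (Set.right_mem_Icc.2 hlbar0.le) hx.2
    rwa [hF1] at this
  have h1F : ∀ x ∈ Set.Ico 0 lbar, 0 < 1 - F x := fun x hx => by linarith [hFlt x hx]
  set h : ℝ → ℝ := fun l => f l / (1 - F l) with hh
  have hhpos : ∀ x ∈ Set.Ico 0 lbar, 0 < h x := fun x hx =>
    div_pos (hfpos x (hsub hx)) (h1F x hx)
  set g : ℝ → ℝ := fun l => l - (h l)⁻¹ with hg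
  -- g strictly monotone on Ico
  have hgmono : StrictMonoOn g (Set.Ico 0 lbar) := by
    intro x hx y hy hxy
    have h1 : h x ≤ h y := hmono hx hy hxy.le
    have h2 : (h y)⁻¹ ≤ (h x)⁻¹ := inv_anti₀ (hhpos x hx) h1
    simp only [hg]
    linarith
  -- g continuous on Ico
  have hgcont : ContinuousOn g (Set.Ico 0 lbar) := by
    apply (continuousOn_id' _).sub
    apply ContinuousOn.inv₀
    · exact (hf.mono hsub).div (continuousOn_const.sub (hFc.mono hsub))
        (fun x hx => (h1F x hx).ne')
    · exact fun x hx => (hhpos x hx).ne'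
  -- minimum of f
  obtain ⟨x₀, hx₀, hmin⟩ := isCompact_Icc.exists_isMinOn
    (Set.nonempty_Icc.2 hlbar0.le) hf
  set m := f x₀ with hm
  have hmpos : 0 < m := hfpos x₀ hx₀
  set ε : ℝ := (lbar - (b - 1)) / 2 with hε
  have hεpos : 0 < ε := by simp only [hε]; linarith
  -- find ℓ₀ close to lbar with F ℓ₀ large
  set a : ℝ := max 0 (lbar - ε) with ha
  have ha0 : 0 ≤ a := le_max_left _ _
  have halt : a < lbar := by
    apply max_lt hlbar0
    linarith
  have haIcc : a ∈ Set.Icc 0 lbar := ⟨ha0, halt.le⟩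
  have hFa1 : F a < 1 := hFlt a ⟨ha0, halt⟩
  set c : ℝ := (max (F a) (1 - m * ε) + 1) / 2 with hc
  have hc1 : c < 1 := by
    have : max (F a) (1 - m * ε) < 1 :=
      max_lt hFa1 (by nlinarith)
    simp only [hc]; linarith
  have hcmem : c ∈ Set.Icc (F a) (F lbar) := by
    constructor
    · have h1 : F a ≤ max (F a) (1 - m * ε) := le_max_left _ _
      have : F a < 1 := hFa1
      simp only [hc]; linarith
    · rw [hF1]; linarith
  obtain ⟨l₀, hl₀mem, hFl₀⟩ := intermediate_value_Icc halt.le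
    (hFc.mono (Set.Icc_subset_Icc ha0 le_rfl)) hcmem
  have hl₀lt : l₀ < lbar := by
    rcases lt_or_eq_of_le hl₀mem.2 with h | h
    · exact h
    · exfalso; rw [h, hF1] at hFl₀; linarith
  have hl₀Ico : l₀ ∈ Set.Ico 0 lbar := ⟨le_trans ha0 hl₀mem.1, hl₀lt⟩
  have hl₀ge : lbar - ε ≤ l₀ := le_trans (le_max_right _ _) hl₀mem.1
  -- g l₀ > b - 1
  have hFl₀big : 1 - m * ε < F l₀ := by
    rw [hFl₀]
    have : 1 - m * ε ≤ max (F a) (1 - m * ε) := le_max_right _ _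
    simp only [hc]; linarith [hFa1, hc1]
  have hinvsmall : (h l₀)⁻¹ < ε := by
    have hfl₀ : 0 < f l₀ := hfpos l₀ (hsub hl₀Ico)
    have h1 : (h l₀)⁻¹ = (1 - F l₀) / f l₀ := by
      simp only [hh, inv_div]
    rw [h1]
    rw [div_lt_iff₀ hfl₀]
    have hm_le : m ≤ f l₀ := hmin (hsub hl₀Ico)
    nlinarith [h1F l₀ hl₀Ico]
  have hgl₀ : b - 1 < g l₀ := by
    simp only [hg]
    have : lbar - 2 * ε = b - 1 := by simp only [hε]; ring
    linarith
  have hg0 : g 0 < b - 1 := by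
    have h0Ico : (0:ℝ) ∈ Set.Ico 0 lbar := ⟨le_rfl, hlbar0⟩
    have : 0 < (h 0)⁻¹ := inv_pos.2 (hhpos 0 h0Ico)
    simp only [hg]; linarith
  have hl₀0 : (0:ℝ) ≤ l₀ := hl₀Ico.1
  -- IVT for g
  have hsub2 : Set.Icc 0 l₀ ⊆ Set.Ico 0 lbar := fun x hx => ⟨hx.1, lt_of_le_of_lt hx.2 hl₀lt⟩
  obtain ⟨l', hl'mem, hgl'⟩ := intermediate_value_Icc hl₀0 (hgcont.mono hsub2)
    ⟨hg0.le, hgl₀.le⟩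
  have hl'Ico : l' ∈ Set.Ico 0 lbar := hsub2 hl'mem
  -- second part first
  have hsecond : ∀ l' ∈ Set.Ico 0 lbar, l' - (f l' / (1 - F l'))⁻¹ = b - 1 →
      l' ∈ Set.Ioo (b - 1) lbar := by
    intro x hx hxeq
    refine ⟨?_, hx.2⟩
    have : 0 < (h x)⁻¹ := inv_pos.2 (hhpos x hx)
    simp only [hh] at this
    linarith
  refine ⟨⟨l', ⟨hl'Ico, hgl'⟩, ?_⟩, hsecond⟩
  rintro y ⟨hyIco, hyeq⟩
  exact hgmono.injOn hyIco hl'Ico (by simpa only [hg, hh] using hyeq.trans hgl'.symm)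
end

section
/- Let b > 1, m > b − 1, and let F be a differentiable cumulative distribution function on [0, ℓ̄] with continuous density f = F′ > 0, F(0) = 0, F(ℓ̄) = 1, and ℓ̄ > b − 1. Define Ψ(ℓ; π) = ((1+m−b)/(1−F(ℓ)))·(π/(1−π)) − (b−1)·F(ℓ)/(1−F(ℓ)). Suppose ℓ′ ∈ (b−1, ℓ̄) satisfies ℓ′ − (1−F(ℓ′))/f(ℓ′) = b − 1, and set π′ = (ℓ′(1−F(ℓ′)) + (b−1)F(ℓ′)) / (1+m−b + ℓ′(1−F(ℓ′)) + (b−1)F(ℓ′)). Then Ψ(ℓ′; π′) = ℓ′, ∂Ψ/∂ℓ (ℓ′; π′) = 1, and π′ > (b−1)/m. -/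
/-!
Writing `K(π) = (1+m-b)·π/(1-π)`, the best response is `Ψ(ℓ; π) = (b-1) + (K(π) - (b-1))/(1-F(ℓ))`,
so `∂Ψ/∂ℓ = (K(π) - (b-1))·f/(1-F)²`. The belief `π′` is chosen so that `K(π′) = ℓ′(1-F(ℓ′)) + (b-1)F(ℓ′)`,
i.e. `K(π′) - (b-1) = (1-F(ℓ′))(ℓ′-(b-1))`, which gives `Ψ(ℓ′; π′) = ℓ′` at once; the first-order
condition `f(ℓ′)(ℓ′-(b-1)) = 1-F(ℓ′)` then makes the slope equal to one. Finally `x ↦ x/(1+m-b+x)`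
is increasing and sends `b-1` to `(b-1)/m`, and `K(π′) > b-1`, so `π′ > (b-1)/m`.
-/

/-- The reduced-form best-response function. -/
noncomputable def Psi (b m : ℝ) (F : ℝ → ℝ) (l q : ℝ) : ℝ :=
  (1 + m - b) / (1 - F l) * (q / (1 - q)) - (b - 1) * (F l / (1 - F l))

section BestResponse

variable {b m : ℝ} {F : ℝ → ℝ} {l q : ℝ}

theorem Psi_eq_of_ne_one (hl : F l ≠ 1) :
    Psi b m F l q = b - 1 + ((1 + m - b) * (q / (1 - q)) - (b - 1)) / (1 - F l) := by
  have : 1 - F l ≠ 0 := sub_ne_zero.2 hl.symm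
  unfold Psi
  field_simp
  ring

theorem hasDerivAt_Psi {f₀ : ℝ} (hF : HasDerivAt F f₀ l) (hl : F l ≠ 1) :
    HasDerivAt (fun x => Psi b m F x q)
      (((1 + m - b) * (q / (1 - q)) - (b - 1)) * f₀ / (1 - F l) ^ 2) l := by
  have hne : 1 - F l ≠ 0 := sub_ne_zero.2 hl.symm
  have hsub : HasDerivAt (fun x => 1 - F x) (-f₀) l := hF.const_sub 1
  have hd := (((hasDerivAt_const l (1 + m - b)).div hsub hne).mul_const (q / (1 - q))).sub
    ((hF.div hsub hne).const_mul (b - 1))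
  refine hd.congr_deriv ?_
  field_simp
  ring

end BestResponse

theorem div_add_div_one_sub_div_add {c A : ℝ} (hcA : c + A ≠ 0) :
    A / (c + A) / (1 - A / (c + A)) = A / c := by
  rw [one_sub_div hcA, add_sub_cancel_right, div_div_div_cancel_right₀ hcA]

theorem div_lt_div_one_add_sub_add {b m A : ℝ} (hb : 1 < b) (hm : b - 1 < m) (hA : b - 1 < A) :
    (b - 1) / m < A / (1 + m - b + A) := by
  rw [div_lt_div_iff₀ (by linarith) (by linarith)]
  nlinarith

theorem stmt5_general (b m lbar : ℝ) (F f : ℝ → ℝ) (l' q' : ℝ)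
    (hb : 1 < b) (hm : b - 1 < m)
    (hF : ∀ x ∈ Set.Icc 0 lbar, HasDerivAt F (f x) x)
    (hfpos : ∀ x ∈ Set.Icc 0 lbar, 0 < f x)
    (hl' : l' ∈ Set.Ioo (b - 1) lbar)
    (heq : l' - (1 - F l') / f l' = b - 1)
    (hq' : q' = (l' * (1 - F l') + (b - 1) * F l') /
      (1 + m - b + l' * (1 - F l') + (b - 1) * F l')) :
    Psi b m F l' q' = l' ∧
    HasDerivAt (fun x => Psi b m F x q') 1 l' ∧
    (b - 1) / m < q' := by
  obtain ⟨hl'₁, hl'₂⟩ := hl'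
  have hl'mem : l' ∈ Set.Icc 0 lbar := ⟨by linarith, hl'₂.le⟩
  have hfl : 0 < f l' := hfpos l' hl'mem
  have hfoc : 1 - F l' = f l' * (l' - (b - 1)) := by
    field_simp at heq
    linarith
  have hsurv : 0 < 1 - F l' := hfoc ▸ mul_pos hfl (by linarith)
  have hFl : F l' ≠ 1 := by linarith
  set A := l' * (1 - F l') + (b - 1) * F l'
  have hexcess : A - (b - 1) = (1 - F l') * (l' - (b - 1)) := by ring
  have hA : b - 1 < A := sub_pos.1 (hexcess ▸ mul_pos hsurv (by linarith))
  have hodds : (1 + m - b) * (q' / (1 - q')) - (b - 1) = (1 - F l') * (l' - (b - 1)) := by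
    rw [hq', add_assoc, div_add_div_one_sub_div_add (by linarith : 0 < 1 + m - b + A).ne',
      mul_div_cancel₀ _ (by linarith), hexcess]
  refine ⟨?_, ?_, ?_⟩
  · rw [Psi_eq_of_ne_one hFl, hodds]
    field_simp
    ring
  · convert hasDerivAt_Psi (hF l' hl'mem) hFl using 1
    rw [hodds, hfoc]
    field_simp
  · rw [hq', add_assoc]
    exact div_lt_div_one_add_sub_add hb hm hA

/-- if `ℓ′ ∈ (b−1, ℓ̄)` satisfies `ℓ′ − (1−F(ℓ′))/f(ℓ′) = b − 1` and
`π′ = (ℓ′(1−F(ℓ′)) + (b−1)F(ℓ′)) / (1+m−b + ℓ′(1−F(ℓ′)) + (b−1)F(ℓ′))`, then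
`Ψ(ℓ′; π′) = ℓ′`, `∂Ψ/∂ℓ(ℓ′; π′) = 1`, and `π′ > (b−1)/m`. -/
theorem stmt5 (b m lbar : ℝ) (F f : ℝ → ℝ) (l' q' : ℝ)
    (hb : 1 < b) (hm : b - 1 < m)
    (hF : ∀ x ∈ Set.Icc 0 lbar, HasDerivAt F (f x) x)
    (hf : ContinuousOn f (Set.Icc 0 lbar))
    (hfpos : ∀ x ∈ Set.Icc 0 lbar, 0 < f x)
    (hF0 : F 0 = 0) (hF1 : F lbar = 1)
    (hlbar : b - 1 < lbar)
    (hl' : l' ∈ Set.Ioo (b - 1) lbar)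
    (heq : l' - (1 - F l') / f l' = b - 1)
    (hq' : q' = (l' * (1 - F l') + (b - 1) * F l') /
      (1 + m - b + l' * (1 - F l') + (b - 1) * F l')) :
    Psi b m F l' q' = l' ∧
    HasDerivAt (fun x => Psi b m F x q') 1 l' ∧
    (b - 1) / m < q' :=
  stmt5_general b m lbar F f l' q' hb hm hF hfpos hl' heq hq'
end

section
/- Let b > 1, m > b − 1, and let F be a differentiable cumulative distribution function on [0, ℓ̄] with continuous density f = F′ > 0, F(0) = 0, F(ℓ̄) = 1. Define Ψ(ℓ; π) = ((1+m−b)/(1−F(ℓ)))·(π/(1−π)) − (b−1)·F(ℓ)/(1−F(ℓ)). Then for every π with 0 < π < (b−1)/m, the fixed-point equation Ψ(ℓ; π) = ℓ has a unique solution ℓ*_c(π) in (0, ℓ̄); moreover ℓ*_c(π) is strictly increasing in π on (0, (b−1)/m). -/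
/-- with `b > 1`, `m > b − 1` and `F` a differentiable cdf on `[0, ℓ̄]` with
continuous positive density, for every `π ∈ (0, (b−1)/m)` the fixed-point equation
`Ψ(ℓ; π) = ℓ` has a unique solution `ℓ*_c(π)` in `(0, ℓ̄)`; moreover the solution is
strictly increasing in `π` on `(0, (b−1)/m)`. -/
theorem stmt6 (b m lbar : ℝ) (F f : ℝ → ℝ)
    (hb : 1 < b) (hm : b - 1 < m) (hlbar : 0 < lbar)
    (hF : ∀ x ∈ Set.Icc 0 lbar, HasDerivAt F (f x) x)
    (hf : ContinuousOn f (Set.Icc 0 lbar))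
    (hfpos : ∀ x ∈ Set.Icc 0 lbar, 0 < f x)
    (hF0 : F 0 = 0) (hF1 : F lbar = 1) :
    (∀ q ∈ Set.Ioo 0 ((b - 1) / m), ∃! l, l ∈ Set.Ioo 0 lbar ∧ Psi b m F l q = l) ∧
    (∀ q₁ ∈ Set.Ioo 0 ((b - 1) / m), ∀ q₂ ∈ Set.Ioo 0 ((b - 1) / m), q₁ < q₂ →
      ∀ l₁ l₂ : ℝ, l₁ ∈ Set.Ioo 0 lbar → Psi b m F l₁ q₁ = l₁ →
        l₂ ∈ Set.Ioo 0 lbar → Psi b m F l₂ q₂ = l₂ → l₁ < l₂) := by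
  have hb1 : (0:ℝ) < b - 1 := by linarith
  have hm0 : (0:ℝ) < m := by linarith
  have hbm : (0:ℝ) < 1 + m - b := by linarith
  have hq1lt : (b-1)/m < 1 := (div_lt_one hm0).2 (by linarith)
  have hFc : ContinuousOn F (Set.Icc 0 lbar) := fun x hx =>
    (hF x hx).continuousAt.continuousWithinAt
  have hmono : StrictMonoOn F (Set.Icc 0 lbar) := by
    apply strictMonoOn_of_deriv_pos (convex_Icc 0 lbar) hFc
    intro x hx
    rw [interior_Icc] at hx
    have hx' : x ∈ Set.Icc 0 lbar := Set.mem_Icc_of_Ioo hx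
    rw [(hF x hx').deriv]
    exact hfpos x hx'
  have hFbound : ∀ l ∈ Set.Ioo 0 lbar, 0 < F l ∧ F l < 1 := by
    intro l hl
    have hlm : l ∈ Set.Icc 0 lbar := ⟨hl.1.le, hl.2.le⟩
    constructor
    · have := hmono (Set.left_mem_Icc.2 hlbar.le) hlm hl.1
      rw [hF0] at this; exact this
    · have := hmono hlm (Set.right_mem_Icc.2 hlbar.le) hl.2
      rw [hF1] at this; exact this
  -- basic facts about q
  have hqfacts : ∀ q ∈ Set.Ioo 0 ((b-1)/m), 0 < q ∧ q < 1 := by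
    intro q hq
    exact ⟨hq.1, hq.2.trans hq1lt⟩
  -- rewrite of Psi
  have psi_eq : ∀ l q : ℝ, F l < 1 → q < 1 →
      Psi b m F l q = (b-1) + ((1+m-b)*(q/(1-q)) - (b-1))/(1 - F l) := by
    intro l q h1 h2
    have h1' : 1 - F l ≠ 0 := ne_of_gt (by linarith)
    have h2' : 1 - q ≠ 0 := ne_of_gt (by linarith)
    unfold Psi
    field_simp
    ring
  -- bounds on A = (1+m-b)*(q/(1-q))
  have hApos : ∀ q ∈ Set.Ioo 0 ((b-1)/m), 0 < (1+m-b)*(q/(1-q)) := by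
    intro q hq
    obtain ⟨h0, h1⟩ := hqfacts q hq
    have : 0 < q/(1-q) := div_pos h0 (by linarith)
    positivity
  have hAlt : ∀ q ∈ Set.Ioo 0 ((b-1)/m), (1+m-b)*(q/(1-q)) < b - 1 := by
    intro q hq
    obtain ⟨h0, h1⟩ := hqfacts q hq
    have hmq : m * q < b - 1 := by
      have := (lt_div_iff₀ hm0).1 hq.2
      linarith
    rw [mul_div_assoc' , div_lt_iff₀ (by linarith : (0:ℝ) < 1 - q)]
    nlinarith
  -- strict decrease in l
  have hdec : ∀ q ∈ Set.Ioo 0 ((b-1)/m), ∀ l₁ ∈ Set.Ioo 0 lbar, ∀ l₂ ∈ Set.Ioo 0 lbar,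
      l₁ < l₂ → Psi b m F l₂ q < Psi b m F l₁ q := by
    intro q hq l₁ hl₁ l₂ hl₂ h12
    obtain ⟨hq0, hq1⟩ := hqfacts q hq
    obtain ⟨hF1p, hF1l⟩ := hFbound l₁ hl₁
    obtain ⟨hF2p, hF2l⟩ := hFbound l₂ hl₂
    have hFlt : F l₁ < F l₂ := hmono ⟨hl₁.1.le, hl₁.2.le⟩ ⟨hl₂.1.le, hl₂.2.le⟩ h12
    rw [psi_eq _ _ hF1l hq1, psi_eq _ _ hF2l hq1]
    have hc : (1+m-b)*(q/(1-q)) - (b-1) < 0 := by linarith [hAlt q hq]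
    have d1 : 0 < 1 - F l₁ := by linarith
    have d2 : 0 < 1 - F l₂ := by linarith
    have key : ((1+m-b)*(q/(1-q)) - (b-1))/(1 - F l₂)
        < ((1+m-b)*(q/(1-q)) - (b-1))/(1 - F l₁) := by
      rw [div_lt_div_iff₀ d2 d1]
      nlinarith
    linarith
  -- strict increase in q
  have hinc : ∀ l ∈ Set.Ioo 0 lbar, ∀ q₁ ∈ Set.Ioo 0 ((b-1)/m), ∀ q₂ ∈ Set.Ioo 0 ((b-1)/m),
      q₁ < q₂ → Psi b m F l q₁ < Psi b m F l q₂ := by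
    intro l hl q₁ hq₁ q₂ hq₂ h12
    obtain ⟨hq10, hq11⟩ := hqfacts q₁ hq₁
    obtain ⟨hq20, hq21⟩ := hqfacts q₂ hq₂
    obtain ⟨hFp, hFl⟩ := hFbound l hl
    rw [psi_eq _ _ hFl hq11, psi_eq _ _ hFl hq21]
    have hA : q₁/(1-q₁) < q₂/(1-q₂) := by
      rw [div_lt_div_iff₀ (by linarith) (by linarith)]
      nlinarith
    have d : 0 < 1 - F l := by linarith
    have key : ((1+m-b)*(q₁/(1-q₁)) - (b-1))/(1 - F l)
        < ((1+m-b)*(q₂/(1-q₂)) - (b-1))/(1 - F l) := by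
      apply div_lt_div_of_pos_right ?_ d
      nlinarith
    linarith
  constructor
  · -- existence and uniqueness
    intro q hq
    obtain ⟨hq0, hq1⟩ := hqfacts q hq
    set A := (1+m-b)*(q/(1-q)) with hA
    have hA0 : 0 < A := hApos q hq
    have hAb : A < b - 1 := hAlt q hq
    -- find l' with F l' close to 1
    set t := (A/(b-1) + 1)/2 with ht
    have htlb : A/(b-1) < t := by
      have : A/(b-1) < 1 := (div_lt_one hb1).2 hAb
      rw [ht]; linarith
    have ht0 : 0 < t := by
      have : 0 < A/(b-1) := div_pos hA0 hb1
      linarith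
    have ht1 : t < 1 := by
      have : A/(b-1) < 1 := (div_lt_one hb1).2 hAb
      rw [ht]; linarith
    obtain ⟨l', hl', hFl'⟩ : ∃ l' ∈ Set.Ioo 0 lbar, F l' = t := by
      have := intermediate_value_Ioo hlbar.le hFc
      have hmem : t ∈ Set.Ioo (F 0) (F lbar) := by
        rw [hF0, hF1]; exact ⟨ht0, ht1⟩
      obtain ⟨l', hl', h⟩ := this hmem
      exact ⟨l', hl', h⟩
    have hFl'lt1 : F l' < 1 := by rw [hFl']; exact ht1
    -- Psi at l' is negative
    have hPsil' : Psi b m F l' q < 0 := by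
      rw [psi_eq _ _ hFl'lt1 hq1, hFl']
      have hd : (0:ℝ) < 1 - t := by linarith
      have h1 : A < (b-1)*t := by
        have := (div_lt_iff₀ hb1).1 htlb
        linarith [mul_comm t (b-1)]
      have : (A - (b-1))/(1-t) < -(b-1) := by
        rw [div_lt_iff₀ hd]
        nlinarith
      linarith
    -- continuity of G on Icc 0 l'
    have hsub : Set.Icc 0 l' ⊆ Set.Icc 0 lbar := by
      apply Set.Icc_subset_Icc le_rfl hl'.2.le
    have hne : ∀ x ∈ Set.Icc 0 l', 1 - F x ≠ 0 := by
      intro x hx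
      have hx' : x ∈ Set.Icc 0 lbar := hsub hx
      have h1 : F x ≤ F l' := hmono.monotoneOn hx' ⟨hl'.1.le, hl'.2.le⟩ hx.2
      have : F x < 1 := lt_of_le_of_lt h1 hFl'lt1
      exact ne_of_gt (by linarith)
    have hGc : ContinuousOn (fun l => Psi b m F l q - l) (Set.Icc 0 l') := by
      unfold Psi
      apply ContinuousOn.sub ?_ continuousOn_id
      apply ContinuousOn.sub
      · exact (continuousOn_const.div (continuousOn_const.sub (hFc.mono hsub)) hne).mul
          continuousOn_const
      · exact continuousOn_const.mul ((hFc.mono hsub).div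
          (continuousOn_const.sub (hFc.mono hsub)) hne)
    have hG0 : Psi b m F 0 q - 0 = A := by
      unfold Psi
      rw [hF0, hA]
      ring
    have hGl' : Psi b m F l' q - l' < 0 := by
      have := hl'.1
      linarith
    obtain ⟨l, hlmem, hGl⟩ : ∃ l ∈ Set.Ioo 0 l', Psi b m F l q - l = 0 := by
      have hivt := intermediate_value_Ioo' hl'.1.le hGc
      have hmem : (0:ℝ) ∈ Set.Ioo (Psi b m F l' q - l') (Psi b m F 0 q - 0) := by
        rw [hG0]; exact ⟨hGl', hA0⟩
      obtain ⟨l, hl, h⟩ := hivt hmem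
      exact ⟨l, hl, h⟩
    have hlIoo : l ∈ Set.Ioo 0 lbar := ⟨hlmem.1, hlmem.2.trans hl'.2⟩
    have hfix : Psi b m F l q = l := by linarith
    refine ⟨l, ⟨hlIoo, hfix⟩, ?_⟩
    rintro y ⟨hy, hyfix⟩
    rcases lt_trichotomy y l with h | h | h
    · have := hdec q hq y hy l hlIoo h
      rw [hyfix, hfix] at this
      linarith
    · exact h
    · have := hdec q hq l hlIoo y hy h
      rw [hyfix, hfix] at this
      linarith
  · -- monotonicity
    intro q₁ hq₁ q₂ hq₂ h12 l₁ l₂ hl₁ hfix₁ hl₂ hfix₂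
    by_contra hcon
    push_neg at hcon
    have h1 : Psi b m F l₁ q₁ < Psi b m F l₁ q₂ := hinc l₁ hl₁ q₁ hq₁ q₂ hq₂ h12
    have h2 : Psi b m F l₁ q₂ ≤ Psi b m F l₂ q₂ := by
      rcases eq_or_lt_of_le hcon with h | h
      · rw [h]
      · exact (hdec q₂ hq₂ l₂ hl₂ l₁ hl₁ h).le
    rw [hfix₁] at h1
    rw [hfix₂] at h2
    linarith
end

section
/- Let b > 1, m > b − 1, and let F be a differentiable cumulative distribution function on [0, ℓ̄] with continuous density f = F′ > 0, F(0) = 0, F(ℓ̄) = 1, and ℓ̄ > b − 1, and suppose the hazard rate h(ℓ) = f(ℓ)/(1−F(ℓ)) is monotone increasing on [0, ℓ̄). Define Ψ(ℓ; π) = ((1+m−b)/(1−F(ℓ)))·(π/(1−π)) − (b−1)·F(ℓ)/(1−F(ℓ)), let ℓ′ ∈ (b−1, ℓ̄) be the unique solution of ℓ − 1/h(ℓ) = b − 1, and let π′ = (ℓ′(1−F(ℓ′)) + (b−1)F(ℓ′)) / (1+m−b + ℓ′(1−F(ℓ′)) + (b−1)F(ℓ′)). Then for every π with (b−1)/m <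 π < π′, the equation Ψ(ℓ; π) = ℓ has exactly two solutions ℓ_L(π) < ℓ_H(π) in (0, ℓ̄), both lying in (b−1, ℓ̄); moreover ℓ_L(π) is strictly increasing in π and ℓ_H(π) is strictly decreasing in π on ((b−1)/m, π′). -/
open Set

section Unimodal

variable {G : ℝ → ℝ} {a p e : ℝ}

lemma exists_pair_eq_of_unimodal (hinc : StrictMonoOn G (Icc a p))
    (hdec : StrictAntiOn G (Icc p e)) (hG : ContinuousOn G (Icc a e)) {u v c : ℝ}
    (hu : u ∈ Icc a p) (hv : v ∈ Icc p e) (hcu : G u < c) (hcv : G v < c) (hcp : c < G p) :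
    ∃ x ∈ Ioo u p, ∃ y ∈ Ioo p v,
      G x = c ∧ G y = c ∧ ∀ l ∈ Icc a e, G l = c → l = x ∨ l = y := by
  obtain ⟨x, hx, hGx⟩ := intermediate_value_Ioo hu.2
    (hG.mono (Icc_subset_Icc hu.1 (hv.1.trans hv.2))) ⟨hcu, hcp⟩
  obtain ⟨y, hy, hGy⟩ := intermediate_value_Ioo' hv.1
    (hG.mono (Icc_subset_Icc (hu.1.trans hu.2) hv.2)) ⟨hcv, hcp⟩
  refine ⟨x, hx, y, hy, hGx, hGy, fun l hl hGl => ?_⟩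
  rcases le_total l p with hlp | hpl
  · exact .inl (hinc.injOn ⟨hl.1, hlp⟩ ⟨hu.1.trans hx.1.le, hx.2.le⟩ (hGl.trans hGx.symm))
  · exact .inr (hdec.injOn ⟨hpl, hl.2⟩ ⟨hy.1.le, hy.2.le.trans hv.2⟩ (hGl.trans hGy.symm))

lemma lt_peak_lt_of_unimodal (hinc : StrictMonoOn G (Icc a p))
    (hdec : StrictAntiOn G (Icc p e)) {x y : ℝ} (hx : x ∈ Icc a e) (hy : y ∈ Icc a e) (hxy : x < y)
    (hG : G x = G y) : x < p ∧ p < y := by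
  constructor
  · by_contra! h
    exact hxy.ne (hdec.injOn ⟨h, hx.2⟩ ⟨h.trans hxy.le, hy.2⟩ hG)
  · by_contra! h
    exact hxy.ne (hinc.injOn ⟨hx.1, hxy.le.trans h⟩ ⟨hy.1, h⟩ hG)

lemma lt_and_lt_of_unimodal (hinc : StrictMonoOn G (Icc a p))
    (hdec : StrictAntiOn G (Icc p e)) {x₁ y₁ x₂ y₂ : ℝ} (hx₁ : x₁ ∈ Icc a e) (hy₁ : y₁ ∈ Icc a e)
    (hx₂ : x₂ ∈ Icc a e) (hy₂ : y₂ ∈ Icc a e) (h₁ : x₁ < y₁) (h₂ : x₂ < y₂)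
    (hG₁ : G x₁ = G y₁) (hG₂ : G x₂ = G y₂) (hlt : G x₁ < G x₂) : x₁ < x₂ ∧ y₂ < y₁ := by
  obtain ⟨hx₁p, hpy₁⟩ := lt_peak_lt_of_unimodal hinc hdec hx₁ hy₁ h₁ hG₁
  obtain ⟨hx₂p, hpy₂⟩ := lt_peak_lt_of_unimodal hinc hdec hx₂ hy₂ h₂ hG₂
  refine ⟨(hinc.lt_iff_lt ⟨hx₁.1, hx₁p.le⟩ ⟨hx₂.1, hx₂p.le⟩).1 hlt,
    (hdec.lt_iff_gt ⟨hpy₁.le, hy₁.2⟩ ⟨hpy₂.le, hy₂.2⟩).1 ?_⟩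
  rwa [← hG₁, ← hG₂]

end Unimodal

lemma strictMonoOn_Icc_of_hasDerivAt_pos {g g' : ℝ → ℝ} {a e : ℝ}
    (hg : ∀ x ∈ Icc a e, HasDerivAt g (g' x) x) (hpos : ∀ x ∈ Ioo a e, 0 < g' x) :
    StrictMonoOn g (Icc a e) :=
  strictMonoOn_of_hasDerivWithinAt_pos (convex_Icc a e)
    (fun x hx => (hg x hx).continuousAt.continuousWithinAt)
    (fun x hx => (hg x (interior_subset hx)).hasDerivWithinAt) (by rwa [interior_Icc])

lemma strictAntiOn_Icc_of_hasDerivAt_neg {g g' : ℝ → ℝ} {a e : ℝ}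
    (hg : ∀ x ∈ Icc a e, HasDerivAt g (g' x) x) (hneg : ∀ x ∈ Ioo a e, g' x < 0) :
    StrictAntiOn g (Icc a e) :=
  strictAntiOn_of_hasDerivWithinAt_neg (convex_Icc a e)
    (fun x hx => (hg x hx).continuousAt.continuousWithinAt)
    (fun x hx => (hg x (interior_subset hx)).hasDerivWithinAt) (by rwa [interior_Icc])

section HazardRate

variable {h : ℝ → ℝ} {s : Set ℝ} {c x y : ℝ}

lemma mul_lt_one_of_lt_of_monotoneOn (hmono : MonotoneOn h s) (hx : x ∈ s) (hy : y ∈ s)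
    (hx0 : 0 ≤ h x) (hy0 : 0 < h y) (hy1 : (y - c) * h y = 1) (hxy : x < y) :
    (x - c) * h x < 1 := by
  rcases le_or_gt x c with hxc | hcx
  · nlinarith
  · calc (x - c) * h x ≤ (x - c) * h y :=
          mul_le_mul_of_nonneg_left (hmono hx hy hxy.le) (sub_pos.2 hcx).le
      _ < (y - c) * h y := by gcongr
      _ = 1 := hy1

lemma one_lt_mul_of_lt_of_monotoneOn (hmono : MonotoneOn h s) (hx : x ∈ s) (hy : y ∈ s)
    (hy0 : 0 < h y) (hy1 : (y - c) * h y = 1) (hyx : y < x) :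
    1 < (x - c) * h x := by
  have hyc : 0 < y - c := pos_of_mul_pos_left (hy1 ▸ one_pos) hy0.le
  calc 1 = (y - c) * h y := hy1.symm
    _ < (x - c) * h y := by gcongr
    _ ≤ (x - c) * h x := mul_le_mul_of_nonneg_left (hmono hy hx hyx.le) (by linarith)

end HazardRate

lemma strictMonoOn_mul_div_one_sub {K : ℝ} (hK : 0 < K) :
    StrictMonoOn (fun q => K * (q / (1 - q))) (Iio 1) := by
  intro q₁ hq₁ q₂ hq₂ hq
  have h₁ : 0 < 1 - q₁ := sub_pos.2 hq₁
  have h₂ : 0 < 1 - q₂ := sub_pos.2 hq₂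
  refine mul_lt_mul_of_pos_left ((div_lt_div_iff₀ h₁ h₂).2 ?_) hK
  nlinarith

lemma div_add_lt_one {K B : ℝ} (hK : 0 < K) (hB : 0 ≤ B) : B / (K + B) < 1 :=
  (div_lt_one (by linarith)).2 (by linarith)

lemma mul_div_one_sub_div_add {K A : ℝ} (hK : K ≠ 0) (hKA : K + A ≠ 0) :
    K * (A / (K + A) / (1 - A / (K + A))) = A := by
  rw [one_sub_div hKA, add_sub_cancel_right, div_div_div_cancel_right₀ hKA,
    mul_div_cancel₀ A hK]

lemma mul_div_one_sub_mem_Ioo {K A B q : ℝ} (hK : 0 < K) (hA : 0 ≤ A) (hB : 0 ≤ B)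
    (hq : q ∈ Ioo (A / (K + A)) (B / (K + B))) : K * (q / (1 - q)) ∈ Ioo A B := by
  have hB1 := div_add_lt_one hK hB
  have hq1 : q < 1 := hq.2.trans hB1
  have hA1 : A / (K + A) < 1 := hq.1.trans hq1
  constructor
  · calc A = K * (A / (K + A) / (1 - A / (K + A))) :=
          (mul_div_one_sub_div_add hK.ne' (by linarith)).symm
      _ < K * (q / (1 - q)) := strictMonoOn_mul_div_one_sub hK hA1 hq1 hq.1
  · calc K * (q / (1 - q)) < K * (B / (K + B) / (1 - B / (K + B))) :=
          strictMonoOn_mul_div_one_sub hK hq1 hB1 hq.2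
      _ = B := mul_div_one_sub_div_add hK.ne' (by linarith)

noncomputable def psiLevel (b : ℝ) (F : ℝ → ℝ) (l : ℝ) : ℝ :=
  l * (1 - F l) + (b - 1) * F l

section PsiLevel

variable {b : ℝ} {F : ℝ → ℝ}

lemma psi_eq_self_iff {m l q : ℝ} (hl : F l ≠ 1) :
    Psi b m F l q = l ↔ psiLevel b F l = (1 + m - b) * (q / (1 - q)) := by
  have hl' : 1 - F l ≠ 0 := sub_ne_zero.2 hl.symm
  rw [Psi, psiLevel, div_mul_eq_mul_div, ← mul_div_assoc (b - 1), div_sub_div_same,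
    div_eq_iff hl']
  constructor <;> intro h <;> linarith

lemma psiLevel_self_sub_one : psiLevel b F (b - 1) = b - 1 := by
  rw [psiLevel]
  ring

lemma psiLevel_of_eq_one {l : ℝ} (hl : F l = 1) : psiLevel b F l = b - 1 := by
  rw [psiLevel, hl]
  ring

lemma hasDerivAt_psiLevel {x d : ℝ} (hF : HasDerivAt F d x) :
    HasDerivAt (psiLevel b F) (1 - F x - (x - (b - 1)) * d) x := by
  have := ((hasDerivAt_id' x).mul (hF.const_sub 1)).add (hF.const_mul (b - 1))
  exact this.congr_deriv (by ring)

end PsiLevel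

section MonotoneHazardRate

variable {b a lbar l' : ℝ} {F f : ℝ → ℝ}

lemma psiLevel_strictMonoOn (hF : ∀ x ∈ Icc a lbar, HasDerivAt F (f x) x)
    (hFlt : ∀ x ∈ Ico a lbar, F x < 1) (hpos : ∀ x ∈ Ico a lbar, 0 < f x / (1 - F x))
    (hmono : MonotoneOn (fun l => f l / (1 - F l)) (Ico a lbar)) (hl' : l' ∈ Ico a lbar)
    (hpeak : (l' - (b - 1)) * (f l' / (1 - F l')) = 1) :
    StrictMonoOn (psiLevel b F) (Icc a l') := by
  refine strictMonoOn_Icc_of_hasDerivAt_pos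
    (fun x hx => hasDerivAt_psiLevel (hF x ⟨hx.1, hx.2.trans hl'.2.le⟩)) fun x hx => ?_
  have hx' : x ∈ Ico a lbar := ⟨hx.1.le, hx.2.trans hl'.2⟩
  have := mul_lt_one_of_lt_of_monotoneOn hmono hx' hl' (hpos x hx').le (hpos l' hl') hpeak hx.2
  rw [← mul_div_assoc, div_lt_one (sub_pos.2 (hFlt x hx'))] at this
  linarith

lemma psiLevel_strictAntiOn (hF : ∀ x ∈ Icc a lbar, HasDerivAt F (f x) x)
    (hFlt : ∀ x ∈ Ico a lbar, F x < 1) (hpos : ∀ x ∈ Ico a lbar, 0 < f x / (1 - F x))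
    (hmono : MonotoneOn (fun l => f l / (1 - F l)) (Ico a lbar)) (hl' : l' ∈ Ico a lbar)
    (hpeak : (l' - (b - 1)) * (f l' / (1 - F l')) = 1) :
    StrictAntiOn (psiLevel b F) (Icc l' lbar) := by
  refine strictAntiOn_Icc_of_hasDerivAt_neg
    (fun x hx => hasDerivAt_psiLevel (hF x ⟨hl'.1.trans hx.1, hx.2⟩)) fun x hx => ?_
  have hx' : x ∈ Ico a lbar := ⟨hl'.1.trans hx.1.le, hx.2⟩
  have := one_lt_mul_of_lt_of_monotoneOn hmono hx' hl' (hpos l' hl') hpeak hx.1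
  rw [← mul_div_assoc, one_lt_div (sub_pos.2 (hFlt x hx'))] at this
  linarith

lemma lt_one_of_hasDerivAt_pos (hF : ∀ x ∈ Icc a lbar, HasDerivAt F (f x) x)
    (hfpos : ∀ x ∈ Icc a lbar, 0 < f x) (hF1 : F lbar = 1) {x : ℝ} (hx : x ∈ Ico a lbar) :
    F x < 1 :=
  hF1 ▸ strictMonoOn_Icc_of_hasDerivAt_pos hF (fun y hy => hfpos y (Ioo_subset_Icc_self hy))
    (Ico_subset_Icc_self hx) (right_mem_Icc.2 (hx.1.trans hx.2.le)) hx.2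

lemma psiLevel_unimodal (hF : ∀ x ∈ Icc a lbar, HasDerivAt F (f x) x)
    (hfpos : ∀ x ∈ Icc a lbar, 0 < f x) (hF1 : F lbar = 1)
    (hmono : MonotoneOn (fun l => f l / (1 - F l)) (Ico a lbar)) (hl' : l' ∈ Ico a lbar)
    (heq : l' - (f l' / (1 - F l'))⁻¹ = b - 1) :
    StrictMonoOn (psiLevel b F) (Icc a l') ∧ StrictAntiOn (psiLevel b F) (Icc l' lbar) := by
  have hFlt (x : ℝ) (hx : x ∈ Ico a lbar) : F x < 1 := lt_one_of_hasDerivAt_pos hF hfpos hF1 hx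
  have hpos (x : ℝ) (hx : x ∈ Ico a lbar) : 0 < f x / (1 - F x) :=
    div_pos (hfpos x (Ico_subset_Icc_self hx)) (sub_pos.2 (hFlt x hx))
  have hpeak : (l' - (b - 1)) * (f l' / (1 - F l')) = 1 := by
    rw [← heq, sub_sub_cancel, inv_mul_cancel₀ (hpos l' hl').ne']
  exact ⟨psiLevel_strictMonoOn hF hFlt hpos hmono hl' hpeak,
    psiLevel_strictAntiOn hF hFlt hpos hmono hl' hpeak⟩

end MonotoneHazardRate

theorem stmt7_general (b m lbar : ℝ) (F f : ℝ → ℝ) (l' q' : ℝ)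
    (hb : 1 < b) (hm : b - 1 < m)
    (hF : ∀ x ∈ Set.Icc 0 lbar, HasDerivAt F (f x) x)
    (hfpos : ∀ x ∈ Set.Icc 0 lbar, 0 < f x)
    (hF1 : F lbar = 1)
    (hmono : MonotoneOn (fun l => f l / (1 - F l)) (Set.Ico 0 lbar))
    (hl' : l' ∈ Set.Ioo (b - 1) lbar)
    (heq : l' - (f l' / (1 - F l'))⁻¹ = b - 1)
    (hq' : q' = (l' * (1 - F l') + (b - 1) * F l') /
      (1 + m - b + l' * (1 - F l') + (b - 1) * F l')) :
    (∀ q ∈ Set.Ioo ((b - 1) / m) q',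
      ∃ lL lH : ℝ, lL < lH ∧ lL ∈ Set.Ioo (b - 1) lbar ∧ lH ∈ Set.Ioo (b - 1) lbar ∧
        Psi b m F lL q = lL ∧ Psi b m F lH q = lH ∧
        ∀ l ∈ Set.Ioo (0 : ℝ) lbar, Psi b m F l q = l → l = lL ∨ l = lH) ∧
    (∀ q₁ ∈ Set.Ioo ((b - 1) / m) q', ∀ q₂ ∈ Set.Ioo ((b - 1) / m) q', q₁ < q₂ →
      ∀ lL₁ lH₁ lL₂ lH₂ : ℝ,
        lL₁ < lH₁ → lL₁ ∈ Set.Ioo (0 : ℝ) lbar → lH₁ ∈ Set.Ioo (0 : ℝ) lbar →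
        Psi b m F lL₁ q₁ = lL₁ → Psi b m F lH₁ q₁ = lH₁ →
        lL₂ < lH₂ → lL₂ ∈ Set.Ioo (0 : ℝ) lbar → lH₂ ∈ Set.Ioo (0 : ℝ) lbar →
        Psi b m F lL₂ q₂ = lL₂ → Psi b m F lH₂ q₂ = lH₂ →
        lL₁ < lL₂ ∧ lH₂ < lH₁) := by
  obtain ⟨hbl', hl'lbar⟩ := hl'
  have hl'mem : l' ∈ Ico 0 lbar := ⟨by linarith, hl'lbar⟩
  obtain ⟨hinc, hdec⟩ := psiLevel_unimodal hF hfpos hF1 hmono hl'mem heq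
  have hfix {l : ℝ} (hl : l ∈ Ioo 0 lbar) (q : ℝ) :
      Psi b m F l q = l ↔ psiLevel b F l = (1 + m - b) * (q / (1 - q)) :=
    psi_eq_self_iff (lt_one_of_hasDerivAt_pos hF hfpos hF1 (Ioo_subset_Ico_self hl)).ne
  have hcont : ContinuousOn (psiLevel b F) (Icc 0 lbar) := fun x hx =>
    (hasDerivAt_psiLevel (hF x hx)).continuousAt.continuousWithinAt
  have hK : 0 < 1 + m - b := by linarith
  have hGl' : b - 1 < psiLevel b F l' :=
    psiLevel_self_sub_one (F := F) ▸ hinc ⟨by linarith, hbl'.le⟩ (right_mem_Icc.2 hl'mem.1) hbl'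
  -- both endpoints have the form `A / (K + A)`, where `K * (π / (1 - π))` takes the value `A`
  have hleft : (b - 1) / m = (b - 1) / (1 + m - b + (b - 1)) := by ring_nf
  have hright : q' = psiLevel b F l' / (1 + m - b + psiLevel b F l') := by
    rw [hq', psiLevel]
    ring
  rw [hleft, hright]
  constructor
  · intro q hq
    obtain ⟨hcu, hcp⟩ := mul_div_one_sub_mem_Ioo hK (by linarith) (by linarith) hq
    obtain ⟨lL, hlL, lH, hlH, hL, hH, huniq⟩ := exists_pair_eq_of_unimodal hinc hdec hcont
      ⟨by linarith, hbl'.le⟩ ⟨hl'lbar.le, le_rfl⟩ (by rwa [psiLevel_self_sub_one])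
      (by rwa [psiLevel_of_eq_one hF1]) hcp
    have hlL' : lL ∈ Ioo 0 lbar := ⟨by linarith [hlL.1], hlL.2.trans hl'lbar⟩
    have hlH' : lH ∈ Ioo 0 lbar := ⟨by linarith [hlH.1], hlH.2⟩
    exact ⟨lL, lH, hlL.2.trans hlH.1, ⟨hlL.1, hlL'.2⟩, ⟨hbl'.trans hlH.1, hlH.2⟩,
      (hfix hlL' q).2 hL, (hfix hlH' q).2 hH,
      fun l hl hPl => huniq l (Ioo_subset_Icc_self hl) ((hfix hl q).1 hPl)⟩
  · intro q₁ hq₁ q₂ hq₂ hq lL₁ lH₁ lL₂ lH₂ h₁ hL₁ hH₁ hP₁ hQ₁ h₂ hL₂ hH₂ hP₂ hQ₂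
    simp only [hfix hL₁, hfix hH₁, hfix hL₂, hfix hH₂] at hP₁ hQ₁ hP₂ hQ₂
    have hq₂1 : q₂ < 1 := hq₂.2.trans (div_add_lt_one hK (by linarith))
    refine lt_and_lt_of_unimodal hinc hdec (Ioo_subset_Icc_self hL₁) (Ioo_subset_Icc_self hH₁)
      (Ioo_subset_Icc_self hL₂) (Ioo_subset_Icc_self hH₂) h₁ h₂ (hP₁.trans hQ₁.symm)
      (hP₂.trans hQ₂.symm) ?_
    rw [hP₁, hP₂]
    exact strictMonoOn_mul_div_one_sub hK (hq.trans hq₂1) hq₂1 hq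

/-- under the Monotone Hazard Rate assumption, with `ℓ′ ∈ (b−1, ℓ̄)` the
unique solution of `ℓ − 1/h(ℓ) = b − 1` and
`π′ = (ℓ′(1−F(ℓ′)) + (b−1)F(ℓ′)) / (1+m−b + ℓ′(1−F(ℓ′)) + (b−1)F(ℓ′))`, for every
`π ∈ ((b−1)/m, π′)` the equation `Ψ(ℓ; π) = ℓ` has exactly two solutions
`ℓ_L(π) < ℓ_H(π)` in `(0, ℓ̄)`, both lying in `(b−1, ℓ̄)`; moreover `ℓ_L` is strictly
increasing and `ℓ_H` strictly decreasing in `π` on `((b−1)/m, π′)`. -/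
theorem stmt7 (b m lbar : ℝ) (F f : ℝ → ℝ) (l' q' : ℝ)
    (hb : 1 < b) (hm : b - 1 < m)
    (hF : ∀ x ∈ Set.Icc 0 lbar, HasDerivAt F (f x) x)
    (hf : ContinuousOn f (Set.Icc 0 lbar))
    (hfpos : ∀ x ∈ Set.Icc 0 lbar, 0 < f x)
    (hF0 : F 0 = 0) (hF1 : F lbar = 1)
    (hlbar : b - 1 < lbar)
    (hmono : MonotoneOn (fun l => f l / (1 - F l)) (Set.Ico 0 lbar))
    (hl' : l' ∈ Set.Ioo (b - 1) lbar)
    (heq : l' - (f l' / (1 - F l'))⁻¹ = b - 1)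
    (hq' : q' = (l' * (1 - F l') + (b - 1) * F l') /
      (1 + m - b + l' * (1 - F l') + (b - 1) * F l')) :
    (∀ q ∈ Set.Ioo ((b - 1) / m) q',
      ∃ lL lH : ℝ, lL < lH ∧ lL ∈ Set.Ioo (b - 1) lbar ∧ lH ∈ Set.Ioo (b - 1) lbar ∧
        Psi b m F lL q = lL ∧ Psi b m F lH q = lH ∧
        ∀ l ∈ Set.Ioo (0 : ℝ) lbar, Psi b m F l q = l → l = lL ∨ l = lH) ∧
    (∀ q₁ ∈ Set.Ioo ((b - 1) / m) q', ∀ q₂ ∈ Set.Ioo ((b - 1) / m) q', q₁ < q₂ →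
      ∀ lL₁ lH₁ lL₂ lH₂ : ℝ,
        lL₁ < lH₁ → lL₁ ∈ Set.Ioo (0 : ℝ) lbar → lH₁ ∈ Set.Ioo (0 : ℝ) lbar →
        Psi b m F lL₁ q₁ = lL₁ → Psi b m F lH₁ q₁ = lH₁ →
        lL₂ < lH₂ → lL₂ ∈ Set.Ioo (0 : ℝ) lbar → lH₂ ∈ Set.Ioo (0 : ℝ) lbar →
        Psi b m F lL₂ q₂ = lL₂ → Psi b m F lH₂ q₂ = lH₂ →
        lL₁ < lL₂ ∧ lH₂ < lH₁) :=
  stmt7_general b m lbar F f l' q' hb hm hF hfpos hF1 hmono hl' heq hq'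
end

section
/- Let b > 1, m > b − 1, let ℓ̄ > 0, let μ be a Borel probability measure on [0, ℓ̄], and let G : [0,1] → [0,1] be L-Lipschitz with L·max(ℓ̄ − (b−1), b−1) < 1 + m − b. For a continuous function s : [0, ℓ̄] → [0,1], define T(s)(ℓ) = 1 − (1+m−b)/(m + (ℓ − (b−1))·∫₀^ℓ̄ G(s(t)) dμ(t)). Then: (i) for every such s, the denominator m + (ℓ − (b−1))·∫ G(s) dμ is at least 1 + m − b > 0 for all ℓ ∈ [0, ℓ̄], and T(s) is again a continuous function from [0, ℓ̄] to [0,1]; (ii) T is a contraction in the supremum norm with constant L·max(ℓ̄ − (b−1), b−1)/(1+m−b) < 1; (iii) T has a unique fixed point s* among continuous functions [0, ℓ̄] → [0,1]; and (iv) s* is nondecreasing in ℓ, and strictly increasing in ℓ whenever ∫₀^ℓ̄ G(s*(t)) dμ(t) > 0. -/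
/-!
`T s` depends on `s` only through the scalar `x = ∫ G ∘ s dμ ∈ [0, 1]`: it is the explicit
function `threshold b m x`. Its denominator is at least `1 + m - b > 0`, so `threshold b m x`
takes values in `[0, 1]`, is nondecreasing in `ℓ` (strictly if `x > 0`), and is Lipschitz in `x`
with constant `max (ℓ̄ - (b - 1)) (b - 1) / (1 + m - b)`. Composing with the `L`-Lipschitz `G`
and integrating against a probability measure makes `T` a contraction. The fixed points of `T`
are the `threshold b m x` with `x` a fixed point of the scalar map
`x ↦ ∫ G (threshold b m x ·) dμ`, a contraction of `[0, 1]`: it has a fixed point by the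
intermediate value theorem, and only one.
-/

open MeasureTheory Set

noncomputable def threshold (b m x l : ℝ) : ℝ := 1 - (1 + m - b) / (m + (l - (b - 1)) * x)

section Threshold

variable {b m x y l : ℝ}

lemma one_add_sub_le_threshold_denom (hb : 1 ≤ b) (hx : x ∈ Icc (0 : ℝ) 1) (hl : 0 ≤ l) :
    1 + m - b ≤ m + (l - (b - 1)) * x := by
  obtain ⟨hx0, hx1⟩ := hx
  rcases le_total (b - 1) l with h | h
  · nlinarith [mul_nonneg (sub_nonneg.2 h) hx0]
  · nlinarith [mul_le_mul_of_nonpos_left hx1 (sub_nonpos.2 h)]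

lemma threshold_denom_pos (hb : 1 ≤ b) (hm : b - 1 < m) (hx : x ∈ Icc (0 : ℝ) 1)
    (hl : 0 ≤ l) : 0 < m + (l - (b - 1)) * x :=
  (sub_pos.2 hm).trans_le (by linarith [one_add_sub_le_threshold_denom (m := m) hb hx hl])

lemma threshold_mem_Icc (hb : 1 ≤ b) (hm : b - 1 < m) (hx : x ∈ Icc (0 : ℝ) 1)
    (hl : 0 ≤ l) : threshold b m x l ∈ Icc (0 : ℝ) 1 := by
  have hD := threshold_denom_pos hb hm hx hl
  have h1 : (1 + m - b) / (m + (l - (b - 1)) * x) ≤ 1 :=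
    (div_le_one hD).2 (one_add_sub_le_threshold_denom hb hx hl)
  have h0 : 0 ≤ (1 + m - b) / (m + (l - (b - 1)) * x) := div_nonneg (by linarith) hD.le
  constructor <;> simp only [threshold] <;> linarith

lemma abs_sub_le_max_of_mem_Icc {c lbar : ℝ} (hl : l ∈ Icc 0 lbar) :
    |l - c| ≤ max (lbar - c) c := by
  rw [abs_le]
  constructor <;> linarith [le_max_left (lbar - c) c, le_max_right (lbar - c) c, hl.1, hl.2]

lemma abs_threshold_sub_le {lbar : ℝ} (hb : 1 ≤ b) (hm : b - 1 < m) (hx : x ∈ Icc (0 : ℝ) 1)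
    (hy : y ∈ Icc (0 : ℝ) 1) (hl : l ∈ Icc 0 lbar) :
    |threshold b m x l - threshold b m y l| ≤
      max (lbar - (b - 1)) (b - 1) / (1 + m - b) * |x - y| := by
  have hc : 0 < 1 + m - b := by linarith
  have hDx := one_add_sub_le_threshold_denom (m := m) hb hx hl.1
  have hDy := one_add_sub_le_threshold_denom (m := m) hb hy hl.1
  have hPx := threshold_denom_pos hb hm hx hl.1
  have hPy := threshold_denom_pos hb hm hy hl.1
  have hdiff : threshold b m x l - threshold b m y l =
      (1 + m - b) * ((l - (b - 1)) * (x - y)) /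
        ((m + (l - (b - 1)) * x) * (m + (l - (b - 1)) * y)) := by
    simp only [threshold]
    field_simp
    ring
  rw [hdiff, abs_div, abs_of_pos (mul_pos hPx hPy), abs_mul, abs_mul, abs_of_pos hc]
  calc (1 + m - b) * (|l - (b - 1)| * |x - y|) /
        ((m + (l - (b - 1)) * x) * (m + (l - (b - 1)) * y))
      ≤ (1 + m - b) * (max (lbar - (b - 1)) (b - 1) * |x - y|) /
        ((1 + m - b) * (1 + m - b)) := by
        gcongr
        exact abs_sub_le_max_of_mem_Icc hl
    _ = max (lbar - (b - 1)) (b - 1) / (1 + m - b) * |x - y| := by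
        field_simp

lemma continuousOn_threshold (hb : 1 ≤ b) (hm : b - 1 < m) (hx : x ∈ Icc (0 : ℝ) 1) :
    ContinuousOn (threshold b m x) (Ici 0) :=
  continuousOn_const.sub <| continuousOn_const.div (by fun_prop)
    fun _ hl => (threshold_denom_pos hb hm hx hl).ne'

lemma monotoneOn_threshold (hb : 1 ≤ b) (hm : b - 1 < m) (hx : x ∈ Icc (0 : ℝ) 1) :
    MonotoneOn (threshold b m x) (Ici 0) := by
  intro l₁ hl₁ l₂ _ h
  have hP := threshold_denom_pos hb hm hx hl₁
  have hc : 0 ≤ 1 + m - b := by linarith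
  unfold threshold
  gcongr
  exact hx.1

lemma strictMonoOn_threshold (hb : 1 ≤ b) (hm : b - 1 < m) (hx : x ∈ Ioc (0 : ℝ) 1) :
    StrictMonoOn (threshold b m x) (Ici 0) := by
  intro l₁ hl₁ l₂ _ h
  have hP := threshold_denom_pos hb hm (Ioc_subset_Icc_self hx) hl₁
  have hc : 0 < 1 + m - b := by linarith
  unfold threshold
  gcongr
  exact hx.1

end Threshold

section SetIntegral

variable {α : Type*} [MeasurableSpace α] {μ : Measure α} [IsZeroOrProbabilityMeasure μ]
  {s : Set α} {f g : α → ℝ}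

lemma setIntegral_mem_Icc_zero_one (hs : MeasurableSet s)
    (hf : ∀ t ∈ s, f t ∈ Icc (0 : ℝ) 1) : ∫ t in s, f t ∂μ ∈ Icc (0 : ℝ) 1 := by
  refine ⟨setIntegral_nonneg hs fun t ht => (hf t ht).1, ?_⟩
  have hbound := norm_setIntegral_le_of_norm_le_const (measure_lt_top μ s) fun t ht => by
    rw [Real.norm_of_nonneg (hf t ht).1]; exact (hf t ht).2
  calc ∫ t in s, f t ∂μ ≤ ‖∫ t in s, f t ∂μ‖ := Real.le_norm_self _
    _ ≤ 1 * μ.real s := hbound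
    _ ≤ 1 := by simp [measureReal_le_one]

lemma abs_setIntegral_sub_le {B : ℝ} (hf : IntegrableOn f s μ) (hg : IntegrableOn g s μ)
    (hB₀ : 0 ≤ B) (hB : ∀ t ∈ s, |f t - g t| ≤ B) :
    |∫ t in s, f t ∂μ - ∫ t in s, g t ∂μ| ≤ B := by
  rw [← integral_sub hf hg]
  calc ‖∫ t in s, (f t - g t) ∂μ‖ ≤ B * μ.real s :=
        norm_setIntegral_le_of_norm_le_const (measure_lt_top μ s) hB
    _ ≤ B := mul_le_of_le_one_right hB₀ measureReal_le_one

end SetIntegral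

section Composition

variable {X : Type*} [TopologicalSpace X] [MeasurableSpace X] [OpensMeasurableSpace X]
  [T2Space X] {μ : Measure X} [IsZeroOrProbabilityMeasure μ] {K : Set X} {U : Set ℝ}
  {L : NNReal} {G : ℝ → ℝ} {s₁ s₂ : X → ℝ}

lemma abs_setIntegral_comp_sub_le (hK : IsCompact K) (hG : LipschitzOnWith L G U)
    (hs₁ : ContinuousOn s₁ K) (hs₁U : MapsTo s₁ K U) (hs₂ : ContinuousOn s₂ K)
    (hs₂U : MapsTo s₂ K U) {C : ℝ} (hC : 0 ≤ C) (h : ∀ t ∈ K, |s₁ t - s₂ t| ≤ C) :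
    |∫ t in K, G (s₁ t) ∂μ - ∫ t in K, G (s₂ t) ∂μ| ≤ L * C := by
  refine abs_setIntegral_sub_le ((hG.continuousOn.comp hs₁ hs₁U).integrableOn_compact hK)
    ((hG.continuousOn.comp hs₂ hs₂U).integrableOn_compact hK) (by positivity) fun t ht => ?_
  calc |G (s₁ t) - G (s₂ t)| ≤ L * |s₁ t - s₂ t| := by
        simpa only [Real.dist_eq] using hG.dist_le_mul _ (hs₁U ht) _ (hs₂U ht)
    _ ≤ L * C := by gcongr; exact h t ht

end Composition

section FixedPoint

variable {b m lbar : ℝ} {L : NNReal} {μ : Measure ℝ} [IsZeroOrProbabilityMeasure μ]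
  {G : ℝ → ℝ}

lemma abs_threshold_setIntegral_sub_le (hb : 1 ≤ b) (hm : b - 1 < m)
    (hG : LipschitzOnWith L G (Icc 0 1)) (hGmap : MapsTo G (Icc 0 1) (Icc 0 1))
    {s₁ s₂ : ℝ → ℝ} (hs₁ : ContinuousOn s₁ (Icc 0 lbar))
    (hs₁01 : MapsTo s₁ (Icc 0 lbar) (Icc 0 1)) (hs₂ : ContinuousOn s₂ (Icc 0 lbar))
    (hs₂01 : MapsTo s₂ (Icc 0 lbar) (Icc 0 1)) {C : ℝ} (hC : 0 ≤ C)
    (h : ∀ t ∈ Icc 0 lbar, |s₁ t - s₂ t| ≤ C) {l : ℝ} (hl : l ∈ Icc 0 lbar) :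
    |threshold b m (∫ t in Icc 0 lbar, G (s₁ t) ∂μ) l -
        threshold b m (∫ t in Icc 0 lbar, G (s₂ t) ∂μ) l| ≤
      L * max (lbar - (b - 1)) (b - 1) / (1 + m - b) * C := by
  have hc : 0 < 1 + m - b := by linarith
  calc _ ≤ max (lbar - (b - 1)) (b - 1) / (1 + m - b) *
        |∫ t in Icc 0 lbar, G (s₁ t) ∂μ - ∫ t in Icc 0 lbar, G (s₂ t) ∂μ| :=
        abs_threshold_sub_le hb hm
          (setIntegral_mem_Icc_zero_one measurableSet_Icc fun _ ht => hGmap (hs₁01 ht))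
          (setIntegral_mem_Icc_zero_one measurableSet_Icc fun _ ht => hGmap (hs₂01 ht)) hl
    _ ≤ max (lbar - (b - 1)) (b - 1) / (1 + m - b) * (L * C) := by
        gcongr
        exact abs_setIntegral_comp_sub_le isCompact_Icc hG hs₁ hs₁01 hs₂ hs₂01 hC h
    _ = L * max (lbar - (b - 1)) (b - 1) / (1 + m - b) * C := by ring

lemma abs_setIntegral_threshold_sub_le (hb : 1 ≤ b) (hm : b - 1 < m)
    (hG : LipschitzOnWith L G (Icc 0 1)) {x y : ℝ} (hx : x ∈ Icc (0 : ℝ) 1)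
    (hy : y ∈ Icc (0 : ℝ) 1) :
    |∫ t in Icc 0 lbar, G (threshold b m x t) ∂μ -
        ∫ t in Icc 0 lbar, G (threshold b m y t) ∂μ| ≤
      L * max (lbar - (b - 1)) (b - 1) / (1 + m - b) * |x - y| := by
  have hc : 0 < 1 + m - b := by linarith
  have hM : 0 ≤ max (lbar - (b - 1)) (b - 1) := (sub_nonneg.2 hb).trans (le_max_right _ _)
  calc _ ≤ L * (max (lbar - (b - 1)) (b - 1) / (1 + m - b) * |x - y|) :=
        abs_setIntegral_comp_sub_le isCompact_Icc hG
          ((continuousOn_threshold hb hm hx).mono Icc_subset_Ici_self)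
          (fun _ hl => threshold_mem_Icc hb hm hx hl.1)
          ((continuousOn_threshold hb hm hy).mono Icc_subset_Ici_self)
          (fun _ hl => threshold_mem_Icc hb hm hy hl.1) (by positivity)
          fun _ hl => abs_threshold_sub_le hb hm hx hy hl
    _ = L * max (lbar - (b - 1)) (b - 1) / (1 + m - b) * |x - y| := by ring

lemma exists_setIntegral_threshold_eq_self (hb : 1 ≤ b) (hm : b - 1 < m)
    (hG : LipschitzOnWith L G (Icc 0 1)) (hGmap : MapsTo G (Icc 0 1) (Icc 0 1)) :
    ∃ x ∈ Icc (0 : ℝ) 1, ∫ t in Icc 0 lbar, G (threshold b m x t) ∂μ = x := by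
  have hLip : LipschitzOnWith _ (fun x => ∫ t in Icc 0 lbar, G (threshold b m x t) ∂μ)
      (Icc 0 1) := LipschitzOnWith.of_dist_le' fun x hx y hy => by
    simpa only [Real.dist_eq] using abs_setIntegral_threshold_sub_le (μ := μ) hb hm hG hx hy
  exact exists_mem_Icc_isFixedPt_of_mapsTo hLip.continuousOn zero_le_one fun _ hx =>
    setIntegral_mem_Icc_zero_one measurableSet_Icc fun _ hl =>
      hGmap (threshold_mem_Icc hb hm hx hl.1)

lemma setIntegral_eq_of_threshold_eq_self (hb : 1 ≤ b) (hm : b - 1 < m)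
    (hG : LipschitzOnWith L G (Icc 0 1)) (hGmap : MapsTo G (Icc 0 1) (Icc 0 1))
    (hL : L * max (lbar - (b - 1)) (b - 1) < 1 + m - b) {x : ℝ} (hx : x ∈ Icc (0 : ℝ) 1)
    (hxfix : ∫ t in Icc 0 lbar, G (threshold b m x t) ∂μ = x)
    {s : ℝ → ℝ} (hs01 : MapsTo s (Icc 0 lbar) (Icc 0 1))
    (hsfix : ∀ l ∈ Icc 0 lbar, threshold b m (∫ t in Icc 0 lbar, G (s t) ∂μ) l = s l) :
    ∫ t in Icc 0 lbar, G (s t) ∂μ = x := by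
  set y := ∫ t in Icc 0 lbar, G (s t) ∂μ
  have hy : y ∈ Icc (0 : ℝ) 1 :=
    setIntegral_mem_Icc_zero_one measurableSet_Icc fun _ ht => hGmap (hs01 ht)
  have hyfix : ∫ t in Icc 0 lbar, G (threshold b m y t) ∂μ = y :=
    setIntegral_congr_fun measurableSet_Icc fun t ht => by simp only [hsfix t ht]
  have hk : L * max (lbar - (b - 1)) (b - 1) / (1 + m - b) < 1 :=
    (div_lt_one (by linarith)).2 hL
  have hcontr := abs_setIntegral_threshold_sub_le (lbar := lbar) (μ := μ) hb hm hG hy hx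
  rw [hyfix, hxfix] at hcontr
  have habs : |y - x| = 0 := le_antisymm (by nlinarith [abs_nonneg (y - x)]) (abs_nonneg _)
  exact sub_eq_zero.1 (abs_eq_zero.1 habs)

end FixedPoint

theorem stmt8_general (b m lbar : ℝ) (L : NNReal) (μ : Measure ℝ) [IsProbabilityMeasure μ]
    (G : ℝ → ℝ) (T : (ℝ → ℝ) → (ℝ → ℝ))
    (hb : 1 < b) (hm : b - 1 < m)
    (hGlip : LipschitzOnWith L G (Set.Icc 0 1))
    (hGmap : Set.MapsTo G (Set.Icc 0 1) (Set.Icc 0 1))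
    (hL : (L : ℝ) * max (lbar - (b - 1)) (b - 1) < 1 + m - b)
    (hT : ∀ s : ℝ → ℝ, ∀ l : ℝ,
      T s l = 1 - (1 + m - b) /
        (m + (l - (b - 1)) * ∫ t in Set.Icc 0 lbar, G (s t) ∂μ)) :
    (∀ s : ℝ → ℝ, ContinuousOn s (Set.Icc 0 lbar) →
      (∀ t ∈ Set.Icc 0 lbar, s t ∈ Set.Icc (0 : ℝ) 1) →
      (0 < 1 + m - b) ∧
      (∀ l ∈ Set.Icc 0 lbar,
        1 + m - b ≤ m + (l - (b - 1)) * ∫ t in Set.Icc 0 lbar, G (s t) ∂μ) ∧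
      ContinuousOn (T s) (Set.Icc 0 lbar) ∧
      (∀ l ∈ Set.Icc 0 lbar, T s l ∈ Set.Icc (0 : ℝ) 1)) ∧
    ((L : ℝ) * max (lbar - (b - 1)) (b - 1) / (1 + m - b) < 1) ∧
    (∀ s₁ s₂ : ℝ → ℝ,
      ContinuousOn s₁ (Set.Icc 0 lbar) → (∀ t ∈ Set.Icc 0 lbar, s₁ t ∈ Set.Icc (0 : ℝ) 1) →
      ContinuousOn s₂ (Set.Icc 0 lbar) → (∀ t ∈ Set.Icc 0 lbar, s₂ t ∈ Set.Icc (0 : ℝ) 1) →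
      ∀ C : ℝ, 0 ≤ C → (∀ t ∈ Set.Icc 0 lbar, |s₁ t - s₂ t| ≤ C) →
        ∀ l ∈ Set.Icc 0 lbar,
          |T s₁ l - T s₂ l| ≤
            (L : ℝ) * max (lbar - (b - 1)) (b - 1) / (1 + m - b) * C) ∧
    (∃ s : ℝ → ℝ,
      (ContinuousOn s (Set.Icc 0 lbar) ∧
        (∀ t ∈ Set.Icc 0 lbar, s t ∈ Set.Icc (0 : ℝ) 1) ∧
        (∀ l ∈ Set.Icc 0 lbar, T s l = s l)) ∧
      (∀ s' : ℝ → ℝ, ContinuousOn s' (Set.Icc 0 lbar) →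
        (∀ t ∈ Set.Icc 0 lbar, s' t ∈ Set.Icc (0 : ℝ) 1) →
        (∀ l ∈ Set.Icc 0 lbar, T s' l = s' l) →
        ∀ l ∈ Set.Icc 0 lbar, s' l = s l) ∧
      MonotoneOn s (Set.Icc 0 lbar) ∧
      ((0 < ∫ t in Set.Icc 0 lbar, G (s t) ∂μ) → StrictMonoOn s (Set.Icc 0 lbar))) := by
  have hT : ∀ s, T s = threshold b m (∫ t in Icc 0 lbar, G (s t) ∂μ) :=
    fun s => funext (hT s)
  have hI : ∀ s : ℝ → ℝ, MapsTo s (Icc 0 lbar) (Icc 0 1) →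
      ∫ t in Icc 0 lbar, G (s t) ∂μ ∈ Icc (0 : ℝ) 1 :=
    fun s hs => setIntegral_mem_Icc_zero_one measurableSet_Icc fun _ ht => hGmap (hs ht)
  obtain ⟨x, hx, hxfix⟩ := exists_setIntegral_threshold_eq_self (lbar := lbar) (μ := μ)
    hb.le hm hGlip hGmap
  refine ⟨fun s _ hs => ⟨by linarith, ?_, ?_, ?_⟩, (div_lt_one (by linarith)).2 hL, ?_,
    threshold b m x, ⟨?_, ?_, ?_⟩, ?_, ?_, ?_⟩
  · exact fun l hl => one_add_sub_le_threshold_denom hb.le (hI s hs) hl.1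
  · exact hT s ▸ (continuousOn_threshold hb.le hm (hI s hs)).mono Icc_subset_Ici_self
  · exact fun l hl => hT s ▸ threshold_mem_Icc hb.le hm (hI s hs) hl.1
  · intro s₁ s₂ hs₁ hs₁01 hs₂ hs₂01 C hC h l hl
    rw [hT, hT]
    exact abs_threshold_setIntegral_sub_le hb.le hm hGlip hGmap hs₁ hs₁01 hs₂ hs₂01 hC h hl
  · exact (continuousOn_threshold hb.le hm hx).mono Icc_subset_Ici_self
  · exact fun l hl => threshold_mem_Icc hb.le hm hx hl.1
  · exact fun l _ => by rw [hT, hxfix]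
  · intro s _ hs01 hsfix l hl
    have hsx : ∫ t in Icc 0 lbar, G (s t) ∂μ = x :=
      setIntegral_eq_of_threshold_eq_self hb.le hm hGlip hGmap hL hx hxfix hs01
        fun l hl => by rw [← hT, hsfix l hl]
    rw [← hsfix l hl, hT, hsx]
  · exact (monotoneOn_threshold hb.le hm hx).mono Icc_subset_Ici_self
  · intro hpos
    exact (strictMonoOn_threshold hb.le hm ⟨hxfix ▸ hpos, hx.2⟩).mono Icc_subset_Ici_self

/-- for `b > 1`, `m > b − 1`, `μ` a Borel probability measure on `[0, ℓ̄]`,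
and `G : [0,1] → [0,1]` an `L`-Lipschitz function with
`L·max(ℓ̄ − (b−1), b−1) < 1 + m − b`, the operator
`T(s)(ℓ) = 1 − (1+m−b)/(m + (ℓ − (b−1))·∫₀^ℓ̄ G(s t) dμ(t))`
(i) maps continuous `[0,ℓ̄] → [0,1]` functions to continuous `[0,ℓ̄] → [0,1]` functions,
with denominator at least `1 + m − b > 0`; (ii) is a sup-norm contraction with constant
`L·max(ℓ̄ − (b−1), b−1)/(1+m−b) < 1`; (iii) has a unique fixed point `s*` among
continuous functions `[0, ℓ̄] → [0,1]`; and (iv) `s*` is nondecreasing, and strictly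
increasing whenever `∫₀^ℓ̄ G(s* t) dμ(t) > 0`. -/
theorem stmt8 (b m lbar : ℝ) (L : NNReal) (μ : Measure ℝ) [IsProbabilityMeasure μ]
    (G : ℝ → ℝ) (T : (ℝ → ℝ) → (ℝ → ℝ))
    (hb : 1 < b) (hm : b - 1 < m) (hlbar : 0 < lbar)
    (hsupp : μ (Set.Icc 0 lbar)ᶜ = 0)
    (hGlip : LipschitzOnWith L G (Set.Icc 0 1))
    (hGmap : Set.MapsTo G (Set.Icc 0 1) (Set.Icc 0 1))
    (hL : (L : ℝ) * max (lbar - (b - 1)) (b - 1) < 1 + m - b)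
    (hT : ∀ s : ℝ → ℝ, ∀ l : ℝ,
      T s l = 1 - (1 + m - b) /
        (m + (l - (b - 1)) * ∫ t in Set.Icc 0 lbar, G (s t) ∂μ)) :
    (∀ s : ℝ → ℝ, ContinuousOn s (Set.Icc 0 lbar) →
      (∀ t ∈ Set.Icc 0 lbar, s t ∈ Set.Icc (0 : ℝ) 1) →
      (0 < 1 + m - b) ∧
      (∀ l ∈ Set.Icc 0 lbar,
        1 + m - b ≤ m + (l - (b - 1)) * ∫ t in Set.Icc 0 lbar, G (s t) ∂μ) ∧
      ContinuousOn (T s) (Set.Icc 0 lbar) ∧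
      (∀ l ∈ Set.Icc 0 lbar, T s l ∈ Set.Icc (0 : ℝ) 1)) ∧
    ((L : ℝ) * max (lbar - (b - 1)) (b - 1) / (1 + m - b) < 1) ∧
    (∀ s₁ s₂ : ℝ → ℝ,
      ContinuousOn s₁ (Set.Icc 0 lbar) → (∀ t ∈ Set.Icc 0 lbar, s₁ t ∈ Set.Icc (0 : ℝ) 1) →
      ContinuousOn s₂ (Set.Icc 0 lbar) → (∀ t ∈ Set.Icc 0 lbar, s₂ t ∈ Set.Icc (0 : ℝ) 1) →
      ∀ C : ℝ, 0 ≤ C → (∀ t ∈ Set.Icc 0 lbar, |s₁ t - s₂ t| ≤ C) →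
        ∀ l ∈ Set.Icc 0 lbar,
          |T s₁ l - T s₂ l| ≤
            (L : ℝ) * max (lbar - (b - 1)) (b - 1) / (1 + m - b) * C) ∧
    (∃ s : ℝ → ℝ,
      (ContinuousOn s (Set.Icc 0 lbar) ∧
        (∀ t ∈ Set.Icc 0 lbar, s t ∈ Set.Icc (0 : ℝ) 1) ∧
        (∀ l ∈ Set.Icc 0 lbar, T s l = s l)) ∧
      (∀ s' : ℝ → ℝ, ContinuousOn s' (Set.Icc 0 lbar) →
        (∀ t ∈ Set.Icc 0 lbar, s' t ∈ Set.Icc (0 : ℝ) 1) →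
        (∀ l ∈ Set.Icc 0 lbar, T s' l = s' l) →
        ∀ l ∈ Set.Icc 0 lbar, s' l = s l) ∧
      MonotoneOn s (Set.Icc 0 lbar) ∧
      ((0 < ∫ t in Set.Icc 0 lbar, G (s t) ∂μ) → StrictMonoOn s (Set.Icc 0 lbar))) :=
  stmt8_general b m lbar L μ G T hb hm hGlip hGmap hL hT
end

section
/- Let b ≥ 2 and m > b − 1, and let γ = √(1 + 4(b−1)/(1+m−b)), α = ((1+m−b)/2)·(1 + γ), β = (γ − 1)/(γ + 1). Then α + β ≤ m, equivalently 1 − (1+m−b)/(α+β) ≤ (b−1)/m, with equality if and only if b = 2. -/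
/-!
Write `s = 1 + m - b`. Squaring the definition of `γ` gives `s (γ - 1)(γ + 1) = 4 (b - 1)`, so
`m - α = (b - 1) - s (γ - 1) / 2 = (b - 1) β`, i.e. `m - (α + β) = (b - 2) β` with `β > 0`.
The second form follows because `x ↦ 1 - s / x` is strictly increasing on `x > 0` and takes the
value `(b - 1) / m` at `x = m`.
-/

open Set

lemma one_lt_sqrt_one_add {x : ℝ} (hx : 0 < x) : 1 < √(1 + x) :=
  (Real.lt_sqrt zero_le_one).2 (by linarith)

lemma mul_sq_sqrt_one_add_div_sub_one {s k : ℝ} (hs : 0 < s) (hk : 0 ≤ k) :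
    s * (√(1 + k / s) ^ 2 - 1) = k := by
  rw [Real.sq_sqrt (by positivity)]
  field_simp
  ring

lemma half_mul_one_add_add_div_eq {s k γ : ℝ} (hγ : s * (γ ^ 2 - 1) = 4 * k) (hγ1 : γ + 1 ≠ 0) :
    s / 2 * (1 + γ) + (γ - 1) / (γ + 1) = s + k - (k - 1) * ((γ - 1) / (γ + 1)) := by
  field_simp
  linear_combination hγ

lemma strictMonoOn_one_sub_div {c : ℝ} (hc : 0 < c) :
    StrictMonoOn (fun x : ℝ => 1 - c / x) (Ioi 0) := fun _ hx _ _ hxy =>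
  sub_lt_sub_left (div_lt_div_of_pos_left hc hx hxy) 1

/-- with `b ≥ 2`, `m > b − 1`, `γ = √(1 + 4(b−1)/(1+m−b))`,
`α = ((1+m−b)/2)(1 + γ)`, `β = (γ − 1)/(γ + 1)`, one has `α + β ≤ m`, equivalently
`1 − (1+m−b)/(α+β) ≤ (b−1)/m`, with equality if and only if `b = 2`. -/
theorem stmt13 (b m γ α β : ℝ) (hb : 2 ≤ b) (hm : b - 1 < m)
    (hγ : γ = Real.sqrt (1 + 4 * (b - 1) / (1 + m - b)))
    (hα : α = (1 + m - b) / 2 * (1 + γ))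
    (hβ : β = (γ - 1) / (γ + 1)) :
    α + β ≤ m ∧
    1 - (1 + m - b) / (α + β) ≤ (b - 1) / m ∧
    (α + β = m ↔ b = 2) ∧
    (1 - (1 + m - b) / (α + β) = (b - 1) / m ↔ b = 2) := by
  have hs : 0 < 1 + m - b := by linarith
  have hγ1 : 1 < γ := hγ ▸ one_lt_sqrt_one_add (div_pos (by linarith) hs)
  have hγsq : (1 + m - b) * (γ ^ 2 - 1) = 4 * (b - 1) := by
    rw [hγ]
    exact mul_sq_sqrt_one_add_div_sub_one hs (by linarith)
  have hβpos : 0 < β := by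
    rw [hβ]
    exact div_pos (by linarith) (by linarith)
  have key : α + β = m - (b - 2) * β := by
    rw [hα, hβ, half_mul_one_add_add_div_eq hγsq (by linarith)]
    ring
  have hαβ : 0 < α + β := by
    have : 0 < α := hα ▸ mul_pos (by positivity) (by linarith)
    linarith
  have hle : α + β ≤ m := key ▸ sub_le_self m (mul_nonneg (by linarith) hβpos.le)
  have heq : α + β = m ↔ b = 2 := by
    rw [key, sub_eq_self, mul_eq_zero, sub_eq_zero, or_iff_left hβpos.ne']
  have hm' : (b - 1) / m = 1 - (1 + m - b) / m := by
    field_simp [show m ≠ 0 by linarith]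
    ring
  have hmono := strictMonoOn_one_sub_div hs
  have hαβ' : α + β ∈ Ioi (0 : ℝ) := hαβ
  have hm0 : m ∈ Ioi (0 : ℝ) := show 0 < m by linarith
  rw [hm']
  exact ⟨hle, (hmono.le_iff_le hαβ' hm0).2 hle, heq, (hmono.injOn.eq_iff hαβ' hm0).trans heq⟩
end

section
/- Let b > 1, m > b − 1, and let F be a differentiable cumulative distribution function on [0, ℓ̄] with continuous density f = F′ > 0, and define Ψ(ℓ; π) = ((1+m−b)/(1−F(ℓ)))·(π/(1−π)) − (b−1)·F(ℓ)/(1−F(ℓ)) for ℓ with F(ℓ) < 1 and π ∈ (0,1). Fix π₁ with 0 < π₁ < (b−1)/m, let I ⊆ ((b−1)/m, 1) be an open interval, and suppose ℓ̂₁, ℓ̂₂ : I → (0, ℓ̄) are differentiable functions with F(ℓ̂₁(t)) < 1 and F(ℓ̂₂(t)) < 1 satisfying, for all t ∈ I, the equilibrium system ℓ̂₁(t) = Ψ(ℓ̂₂(t); π₁) and ℓ̂₂(t) = Ψ(ℓ̂₁(t); t). Then ℓ̂₁′(t) < 0 and ℓ̂₂′(t) > 0 for all t ∈ I; that is, an increase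 in the optimist's belief π₂ = t strictly lowers the pessimist's equilibrium threshold ℓ̂₁ and strictly raises the optimist's equilibrium threshold ℓ̂₂. -/
/-!
Differentiating the equilibrium system in `t` gives `ℓ̂₁' = α ℓ̂₂'` and `ℓ̂₂' = β ℓ̂₁' + γ`, where
`α = f(ℓ̂₂) ∂_F Ψ(ℓ̂₂; π₁)` has the sign of `π₁ m - (b - 1) < 0`, `β = f(ℓ̂₁) ∂_F Ψ(ℓ̂₁; t)` has
the sign of `t m - (b - 1) > 0`, and `γ = ∂_π Ψ(ℓ̂₁; t) > 0`. Hence `(1 - αβ) ℓ̂₂' = γ` with `1 - αβ > 0`.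
-/

-- The partial derivatives of `(u, q) ↦ Ψ` with `u = F ℓ` in place of `ℓ`.
noncomputable def Psi.derivCdf (b m u q : ℝ) : ℝ := (q * m - (b - 1)) / ((1 - q) * (1 - u) ^ 2)

noncomputable def Psi.derivBelief (b m u q : ℝ) : ℝ := (1 + m - b) / ((1 - u) * (1 - q) ^ 2)

theorem HasDerivAt.Psi {b m t F' l' q' : ℝ} {F l q : ℝ → ℝ}
    (hF : HasDerivAt F F' (l t)) (hl : HasDerivAt l l' t) (hq : HasDerivAt q q' t)
    (hFl : F (l t) ≠ 1) (hq1 : q t ≠ 1) :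
    HasDerivAt (fun s => Psi b m F (l s) (q s))
      (Psi.derivCdf b m (F (l t)) (q t) * F' * l' + Psi.derivBelief b m (F (l t)) (q t) * q') t := by
  have hu : HasDerivAt (fun s => F (l s)) (F' * l') t := hF.comp t hl
  have hFl' : 1 - F (l t) ≠ 0 := sub_ne_zero.mpr hFl.symm
  have hq1' : 1 - q t ≠ 0 := sub_ne_zero.mpr hq1.symm
  have hden := hu.const_sub 1
  have h := (((hasDerivAt_const t (1 + m - b)).div hden hFl').mul
    (hq.div (hq.const_sub 1) hq1')).sub ((hu.div hden hFl').const_mul (b - 1))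
  refine h.congr_deriv ?_
  simp only [Psi.derivCdf, Psi.derivBelief, Pi.div_apply]
  field_simp
  ring

namespace Psi

variable {b m u q : ℝ}

theorem derivCdf_neg (hq : q * m < b - 1) (hq1 : q < 1) (hu : u < 1) : derivCdf b m u q < 0 :=
  div_neg_of_neg_of_pos (by linarith) (mul_pos (by linarith) (pow_pos (by linarith) 2))

theorem derivCdf_pos (hq : b - 1 < q * m) (hq1 : q < 1) (hu : u < 1) : 0 < derivCdf b m u q :=
  div_pos (by linarith) (mul_pos (by linarith) (pow_pos (by linarith) 2))

theorem derivBelief_pos (hm : b - 1 < m) (hq1 : q < 1) (hu : u < 1) : 0 < derivBelief b m u q :=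
  div_pos (by linarith) (mul_pos (by linarith) (pow_pos (by linarith) 2))

end Psi

theorem neg_and_pos_of_eq_mul_of_eq_mul_add {x y α β γ : ℝ} (hx : x = α * y)
    (hy : y = β * x + γ) (hα : α < 0) (hβ : 0 ≤ β) (hγ : 0 < γ) : x < 0 ∧ 0 < y := by
  have hy' : 0 < y := by
    have hαβ : α * β ≤ 0 := mul_nonpos_of_nonpos_of_nonneg hα.le hβ
    nlinarith
  exact ⟨hx ▸ mul_neg_of_neg_of_pos hα hy', hy'⟩

theorem stmt17_general (b m lbar q₁ a c : ℝ) (F f l₁ l₂ l₁' l₂' : ℝ → ℝ)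
    (hb : 1 < b) (hm : b - 1 < m)
    (hF : ∀ x ∈ Set.Icc 0 lbar, HasDerivAt F (f x) x)
    (hfpos : ∀ x ∈ Set.Icc 0 lbar, 0 < f x)
    (hq₁ : q₁ ∈ Set.Ioo 0 ((b - 1) / m))
    (hI : Set.Ioo a c ⊆ Set.Ioo ((b - 1) / m) 1)
    (hd₁ : ∀ t ∈ Set.Ioo a c, HasDerivAt l₁ (l₁' t) t)
    (hd₂ : ∀ t ∈ Set.Ioo a c, HasDerivAt l₂ (l₂' t) t)
    (hr₁ : ∀ t ∈ Set.Ioo a c, l₁ t ∈ Set.Ioo 0 lbar ∧ F (l₁ t) < 1)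
    (hr₂ : ∀ t ∈ Set.Ioo a c, l₂ t ∈ Set.Ioo 0 lbar ∧ F (l₂ t) < 1)
    (heq₁ : ∀ t ∈ Set.Ioo a c, l₁ t = Psi b m F (l₂ t) q₁)
    (heq₂ : ∀ t ∈ Set.Ioo a c, l₂ t = Psi b m F (l₁ t) t) :
    ∀ t ∈ Set.Ioo a c, l₁' t < 0 ∧ 0 < l₂' t := by
  intro t ht
  obtain ⟨htm, ht1⟩ := hI ht
  obtain ⟨hl₁, hFl₁⟩ := hr₁ t ht
  obtain ⟨hl₂, hFl₂⟩ := hr₂ t ht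
  have hm0 : 0 < m := by linarith
  have hq₁1 : q₁ < 1 := hq₁.2.trans (htm.trans ht1)
  have hnhds := isOpen_Ioo.mem_nhds ht
  have hE₁ := (hd₁ t ht).unique <| ((hF _ (Set.Ioo_subset_Icc_self hl₂)).Psi (hd₂ t ht)
    (hasDerivAt_const t q₁) hFl₂.ne hq₁1.ne).congr_of_eventuallyEq
      (Filter.eventually_of_mem hnhds heq₁)
  have hE₂ := (hd₂ t ht).unique <| ((hF _ (Set.Ioo_subset_Icc_self hl₁)).Psi (hd₁ t ht)
    (hasDerivAt_id t) hFl₁.ne ht1.ne).congr_of_eventuallyEq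
      (Filter.eventually_of_mem hnhds heq₂)
  simp only [mul_zero, add_zero, id, mul_one] at hE₁ hE₂
  refine neg_and_pos_of_eq_mul_of_eq_mul_add hE₁ hE₂ ?_ ?_ (Psi.derivBelief_pos hm ht1 hFl₁)
  · exact mul_neg_of_neg_of_pos (Psi.derivCdf_neg ((lt_div_iff₀ hm0).mp hq₁.2) hq₁1 hFl₂)
      (hfpos _ (Set.Ioo_subset_Icc_self hl₂))
  · exact (mul_pos (Psi.derivCdf_pos ((div_lt_iff₀ hm0).mp htm) ht1 hFl₁)
      (hfpos _ (Set.Ioo_subset_Icc_self hl₁))).le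

/-- with asymmetric commonly known beliefs `π₁ < (b−1)/m < π₂`, if the
interior equilibrium thresholds `ℓ̂₁, ℓ̂₂`, viewed as differentiable functions of
`π₂ = t` on an open interval `I = (a, c) ⊆ ((b−1)/m, 1)`, solve the system
`ℓ̂₁(t) = Ψ(ℓ̂₂(t); π₁)` and `ℓ̂₂(t) = Ψ(ℓ̂₁(t); t)`, then `ℓ̂₁′(t) < 0 < ℓ̂₂′(t)` on `I`:
an increase in the optimist's belief strictly lowers the pessimist's equilibrium
threshold and strictly raises the optimist's equilibrium threshold. -/
theorem stmt17 (b m lbar q₁ a c : ℝ) (F f l₁ l₂ l₁' l₂' : ℝ → ℝ)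
    (hb : 1 < b) (hm : b - 1 < m) (hlbar : 0 < lbar)
    (hF : ∀ x ∈ Set.Icc 0 lbar, HasDerivAt F (f x) x)
    (hf : ContinuousOn f (Set.Icc 0 lbar))
    (hfpos : ∀ x ∈ Set.Icc 0 lbar, 0 < f x)
    (hq₁ : q₁ ∈ Set.Ioo 0 ((b - 1) / m))
    (hI : Set.Ioo a c ⊆ Set.Ioo ((b - 1) / m) 1)
    (hd₁ : ∀ t ∈ Set.Ioo a c, HasDerivAt l₁ (l₁' t) t)
    (hd₂ : ∀ t ∈ Set.Ioo a c, HasDerivAt l₂ (l₂' t) t)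
    (hr₁ : ∀ t ∈ Set.Ioo a c, l₁ t ∈ Set.Ioo 0 lbar ∧ F (l₁ t) < 1)
    (hr₂ : ∀ t ∈ Set.Ioo a c, l₂ t ∈ Set.Ioo 0 lbar ∧ F (l₂ t) < 1)
    (heq₁ : ∀ t ∈ Set.Ioo a c, l₁ t = Psi b m F (l₂ t) q₁)
    (heq₂ : ∀ t ∈ Set.Ioo a c, l₂ t = Psi b m F (l₁ t) t) :
    ∀ t ∈ Set.Ioo a c, l₁' t < 0 ∧ 0 < l₂' t :=
  stmt17_general b m lbar q₁ a c F f l₁ l₂ l₁' l₂' hb hm hF hfpos hq₁ hI hd₁ hd₂ hr₁ hr₂ heq₁ heq₂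
end
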